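/- Let γ : ℝ → ℝ² be a smooth unit-speed self-shrinking curve, and define the operator Lf = f″ − ½⟨γ, γ′⟩f′ + (H² + ½)f for functions f : ℝ → ℝ. Then L H = H, i.e. H″ − ½⟨γ,γ′⟩H′ + (H² + ½)H = H, and for every constant vector v ∈ ℝ² the function f(t) = ⟨v, n(t)⟩ satisfies L f = ½ f. -/

import Mathlib

/-!
The Frenet equations of a unit-speed plane curve read `γ″ = −H n` and `n′ = H γ′`. Differentiating
the shrinker equation `2H = ⟨γ, n⟩` with them gives `H′ = ½ H ⟨γ, γ′⟩`, and `⟨γ, γ′⟩′ = 1 − 2H²`.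
Together with `⟨v, n⟩′ = H ⟨v, γ′⟩` and `⟨v, γ′⟩′ = −H ⟨v, n⟩`, this reduces both `L H = H` and
`L ⟨v, n⟩ = ½ ⟨v, n⟩` to polynomial identities.
-/

noncomputable section
open Real MeasureTheory
open scoped RealInnerProductSpace

abbrev E2 := EuclideanSpace ℝ (Fin 2)

/-- The unit normal of a unit-speed plane curve: `γ′` rotated by `−π/2`. -/
def normal (γ : ℝ → E2) (t : ℝ) : E2 := WithLp.toLp 2 ![deriv γ t 1, -(deriv γ t 0)]

/-- The curvature `H = −⟨γ″, n⟩` of a unit-speed plane curve. -/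
def curv (γ : ℝ → E2) (t : ℝ) : ℝ := -⟪deriv (deriv γ) t, normal γ t⟫

/-- The stability operator `L f = f″ − ½⟨γ, γ′⟩ f′ + (H² + ½) f` along a plane curve. -/
def Lop (γ : ℝ → E2) (f : ℝ → ℝ) (t : ℝ) : ℝ :=
  deriv (deriv f) t - (1/2) * ⟪γ t, deriv γ t⟫ * deriv f t + (curv γ t ^ 2 + 1/2) * f t

def rot : E2 →L[ℝ] E2 :=
  LinearMap.toContinuousLinearMap
    { toFun := fun u => WithLp.toLp 2 ![u 1, -(u 0)]
      map_add' := fun u w => by ext i; fin_cases i <;> simp [add_comm]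
      map_smul' := fun c u => by ext i; fin_cases i <;> simp }

lemma rot_apply (u : E2) : rot u = WithLp.toLp 2 ![u 1, -(u 0)] := rfl

lemma normal_eq_rot (γ : ℝ → E2) (t : ℝ) : normal γ t = rot (deriv γ t) := rfl

lemma inner_self_rot (u : E2) : ⟪u, rot u⟫ = 0 := by
  simp [rot_apply, PiLp.inner_apply, Fin.sum_univ_two, mul_comm]

lemma rot_rot (u : E2) : rot (rot u) = -u := by
  ext i; fin_cases i <;> simp [rot_apply]

lemma eq_inner_smul_add_inner_rot_smul {u : E2} (hu : ‖u‖ = 1) (w : E2) :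
    w = ⟪w, u⟫ • u + ⟪w, rot u⟫ • rot u := by
  have h : u 0 ^ 2 + u 1 ^ 2 = 1 := by
    simpa [EuclideanSpace.norm_eq, Fin.sum_univ_two] using hu
  ext i; fin_cases i
  · simp only [Fin.zero_eta, rot_apply, PiLp.add_apply, PiLp.smul_apply, smul_eq_mul,
      PiLp.inner_apply, RCLike.inner_apply, conj_trivial, Fin.sum_univ_two, Matrix.cons_val_zero,
      Matrix.cons_val_one, Matrix.cons_val_fin_one]
    linear_combination -(w 0) * h
  · simp only [Fin.mk_one, rot_apply, PiLp.add_apply, PiLp.smul_apply, smul_eq_mul,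
      PiLp.inner_apply, RCLike.inner_apply, conj_trivial, Fin.sum_univ_two, Matrix.cons_val_zero,
      Matrix.cons_val_one, Matrix.cons_val_fin_one]
    linear_combination -(w 1) * h

section UnitSpeed

variable {γ : ℝ → E2} {t : ℝ}

lemma inner_deriv_deriv_deriv_eq_zero (hunit : ∀ t, ‖deriv γ t‖ = 1)
    (hγ' : DifferentiableAt ℝ (deriv γ) t) : ⟪deriv (deriv γ) t, deriv γ t⟫ = 0 := by
  have hconst : (fun s => ⟪deriv γ s, deriv γ s⟫) = fun _ => (1 : ℝ) := by
    ext s; rw [real_inner_self_eq_norm_sq, hunit, one_pow]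
  have h := hγ'.hasDerivAt.inner ℝ hγ'.hasDerivAt
  rw [hconst, real_inner_comm (deriv γ t)] at h
  rw [real_inner_comm]
  linarith [h.unique (hasDerivAt_const t 1)]

lemma deriv_deriv_eq_neg_curv_smul_normal (hunit : ∀ t, ‖deriv γ t‖ = 1)
    (hγ' : DifferentiableAt ℝ (deriv γ) t) :
    deriv (deriv γ) t = -curv γ t • normal γ t := by
  conv_lhs => rw [eq_inner_smul_add_inner_rot_smul (hunit t) (deriv (deriv γ) t)]
  rw [inner_deriv_deriv_deriv_eq_zero hunit hγ', curv, normal_eq_rot, neg_neg, zero_smul,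
    zero_add]

lemma hasDerivAt_normal (hunit : ∀ t, ‖deriv γ t‖ = 1) (hγ' : DifferentiableAt ℝ (deriv γ) t) :
    HasDerivAt (normal γ) (curv γ t • deriv γ t) t := by
  have h := rot.hasFDerivAt.comp_hasDerivAt t hγ'.hasDerivAt
  rw [deriv_deriv_eq_neg_curv_smul_normal hunit hγ', normal_eq_rot, map_smul, rot_rot,
    smul_neg, neg_smul, neg_neg] at h
  exact h

lemma hasDerivAt_inner_normal (hunit : ∀ t, ‖deriv γ t‖ = 1)
    (hγ' : DifferentiableAt ℝ (deriv γ) t) (v : E2) :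
    HasDerivAt (fun s => ⟪v, normal γ s⟫) (curv γ t * ⟪v, deriv γ t⟫) t := by
  simpa [inner_smul_right] using (hasDerivAt_const t v).inner ℝ (hasDerivAt_normal hunit hγ')

lemma hasDerivAt_inner_deriv (hunit : ∀ t, ‖deriv γ t‖ = 1) (hγ : DifferentiableAt ℝ γ t)
    (hγ' : DifferentiableAt ℝ (deriv γ) t) :
    HasDerivAt (fun s => ⟪γ s, deriv γ s⟫) (1 - curv γ t * ⟪γ t, normal γ t⟫) t := by
  have h := hγ.hasDerivAt.inner ℝ hγ'.hasDerivAt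
  rwa [deriv_deriv_eq_neg_curv_smul_normal hunit hγ', real_inner_self_eq_norm_sq, hunit,
    inner_smul_right, one_pow, neg_mul, ← sub_eq_neg_add] at h

end UnitSpeed

section SelfShrinker

variable {γ : ℝ → E2}

lemma hasDerivAt_curv_of_shrinker (hunit : ∀ t, ‖deriv γ t‖ = 1) (hγ : Differentiable ℝ γ)
    (hγ' : Differentiable ℝ (deriv γ)) (hshrink : ∀ t, curv γ t = ⟪γ t, normal γ t⟫ / 2)
    (t : ℝ) : HasDerivAt (curv γ) (curv γ t * ⟪γ t, deriv γ t⟫ / 2) t := by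
  have h := ((hγ t).hasDerivAt.inner ℝ (hasDerivAt_normal hunit (hγ' t))).div_const 2
  rw [normal_eq_rot, inner_self_rot, add_zero, inner_smul_right] at h
  exact h.congr_of_eventuallyEq (.of_forall hshrink)

lemma hasDerivAt_inner_deriv_of_shrinker (hunit : ∀ t, ‖deriv γ t‖ = 1)
    (hγ : Differentiable ℝ γ) (hγ' : Differentiable ℝ (deriv γ))
    (hshrink : ∀ t, curv γ t = ⟪γ t, normal γ t⟫ / 2) (t : ℝ) :
    HasDerivAt (fun s => ⟪γ s, deriv γ s⟫) (1 - 2 * curv γ t ^ 2) t := by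
  convert hasDerivAt_inner_deriv hunit (hγ t) (hγ' t) using 1
  rw [hshrink t]
  ring

theorem Lop_curv_of_shrinker (hunit : ∀ t, ‖deriv γ t‖ = 1) (hγ : Differentiable ℝ γ)
    (hγ' : Differentiable ℝ (deriv γ)) (hshrink : ∀ t, curv γ t = ⟪γ t, normal γ t⟫ / 2)
    (t : ℝ) : Lop γ (curv γ) t = curv γ t := by
  have hH := hasDerivAt_curv_of_shrinker hunit hγ hγ' hshrink
  have hp := hasDerivAt_inner_deriv_of_shrinker hunit hγ hγ' hshrink
  have hH' : HasDerivAt (deriv (curv γ))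
      ((curv γ t * ⟪γ t, deriv γ t⟫ / 2 * ⟪γ t, deriv γ t⟫
        + curv γ t * (1 - 2 * curv γ t ^ 2)) / 2) t := by
    rw [funext fun s => (hH s).deriv]
    exact ((hH t).mul (hp t)).div_const 2
  rw [Lop, hH'.deriv, (hH t).deriv]
  ring

theorem Lop_inner_normal_of_shrinker (hunit : ∀ t, ‖deriv γ t‖ = 1) (hγ : Differentiable ℝ γ)
    (hγ' : Differentiable ℝ (deriv γ)) (hshrink : ∀ t, curv γ t = ⟪γ t, normal γ t⟫ / 2)
    (v : E2) (t : ℝ) :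
    Lop γ (fun s => ⟪v, normal γ s⟫) t = 1 / 2 * ⟪v, normal γ t⟫ := by
  have hH := hasDerivAt_curv_of_shrinker hunit hγ hγ' hshrink t
  have hvτ : HasDerivAt (fun s => ⟪v, deriv γ s⟫) (-curv γ t * ⟪v, normal γ t⟫) t := by
    simpa [deriv_deriv_eq_neg_curv_smul_normal hunit (hγ' t), inner_smul_right] using
      (hasDerivAt_const t v).inner ℝ (hγ' t).hasDerivAt
  have hf' : HasDerivAt (deriv fun s => ⟪v, normal γ s⟫)
      (curv γ t * ⟪γ t, deriv γ t⟫ / 2 * ⟪v, deriv γ t⟫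
        + curv γ t * (-curv γ t * ⟪v, normal γ t⟫)) t := by
    rw [funext fun s => (hasDerivAt_inner_normal hunit (hγ' s) v).deriv]
    exact hH.mul hvτ
  rw [Lop, hf'.deriv, (hasDerivAt_inner_normal hunit (hγ' t) v).deriv]
  ring

end SelfShrinker

/-- On a smooth unit-speed self-shrinking curve, `L H = H`, and for every
constant vector `v` the function `t ↦ ⟨v, n(t)⟩` satisfies `L f = ½ f`. -/
theorem stmt7 (γ : ℝ → E2) (hγ : ContDiff ℝ (⊤ : ℕ∞) γ)
    (hunit : ∀ t, ‖deriv γ t‖ = 1)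
    (hshrink : ∀ t, curv γ t = ⟪γ t, normal γ t⟫ / 2) :
    (∀ t : ℝ, Lop γ (curv γ) t = curv γ t) ∧
    (∀ v : E2, ∀ t : ℝ,
      Lop γ (fun s => ⟪v, normal γ s⟫) t = (1/2) * ⟪v, normal γ t⟫) := by
  have hγ₁ : Differentiable ℝ γ := hγ.differentiable (by simp)
  have hγ₂ : Differentiable ℝ (deriv γ) :=
    (contDiff_infty_iff_deriv.mp hγ).2.differentiable (by simp)
  exact ⟨Lop_curv_of_shrinker hunit hγ₁ hγ₂ hshrink,
    Lop_inner_normal_of_shrinker hunit hγ₁ hγ₂ hshrink⟩
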